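/- arXiv:1806.01495 — 3 statements merged into one kernel-verified Lean document; each statement's English description precedes it below -/
import Mathlib

section
/- Let r, ρ, α > 0 and c₀ ∈ ℝ. Define the path c(t) = c₀ − ((ρ − r)/(αr))·t and the consumption plan b(t) = r·c(t) + (ρ − r)/(αr) for t ≥ 0. Then c'(t) = r·c(t) − b(t) for all t ≥ 0, the integral ∫₀^∞ exp(−ρt)·exp(−α·b(t)) dt converges, and −∫₀^∞ exp(−ρt)·exp(−α·b(t)) dt = −(1/r)·exp(1 − ρ/r)·exp(−αr·c₀); that is, the linear feedback plan achieves the value V(c₀) where V(c) = −(1/r)·exp(1 − ρ/r)·exp(−αrc). -/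
open Real MeasureTheory

/-- The linear feedback consumption plan `b(t) = r c(t) + (ρ - r)/(α r)` along the wealth
path `c(t) = c₀ - ((ρ - r)/(α r)) t` satisfies the wealth dynamics `c' = r c - b`, its
discounted utility integral converges, and it achieves the candidate value
`V(c₀) = -(1/r) exp(1 - ρ/r) exp(-α r c₀)`. -/
theorem linear_plan_achieves_value (r ρ α c₀ : ℝ) (hr : 0 < r) (hρ : 0 < ρ) (hα : 0 < α)
    (c b : ℝ → ℝ)
    (hc : ∀ t, c t = c₀ - ((ρ - r) / (α * r)) * t)
    (hb : ∀ t, b t = r * c t + (ρ - r) / (α * r)) :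
    (∀ t : ℝ, 0 ≤ t → deriv c t = r * c t - b t) ∧
    IntegrableOn (fun t => Real.exp (-ρ * t) * Real.exp (-α * b t)) (Set.Ioi 0) volume ∧
    -∫ t in Set.Ioi (0 : ℝ), Real.exp (-ρ * t) * Real.exp (-α * b t)
      = -(1 / r) * Real.exp (1 - ρ / r) * Real.exp (-α * r * c₀) := by
  set k : ℝ := (ρ - r) / (α * r) with hk
  have hcf : c = fun t => c₀ - k * t := funext hc
  have hne : α * r ≠ 0 := by positivity
  -- key pointwise rewriting of the integrand
  have key : ∀ t : ℝ, Real.exp (-ρ * t) * Real.exp (-α * b t)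
      = Real.exp (1 - ρ / r) * Real.exp (-α * r * c₀) * Real.exp (-(r * t)) := by
    intro t
    rw [hb t, hc t, ← Real.exp_add, ← Real.exp_add, ← Real.exp_add]
    congr 1
    have hαk : α * k = (ρ - r) / r := by
      rw [hk]; field_simp
    have : -α * (r * (c₀ - k * t) + k) = -α * r * c₀ + α * k * (r * t) - α * k := by ring
    rw [this, hαk]
    have h1 : (ρ - r) / r * (r * t) = (ρ - r) * t := by
      field_simp
    have h2 : (1 : ℝ) - ρ / r = -((ρ - r) / r) := by
      field_simp; ring
    rw [h1, h2]; ring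
  refine ⟨?_, ?_, ?_⟩
  · intro t ht
    have hder : HasDerivAt c (-k) t := by
      rw [hcf]
      simpa using ((hasDerivAt_id t).const_mul k).const_sub c₀
    rw [hder.deriv, hb t]; ring
  · have : IntegrableOn (fun t => Real.exp (1 - ρ / r) * Real.exp (-α * r * c₀)
        * Real.exp (-(r * t))) (Set.Ioi 0) volume := by
      have := (exp_neg_integrableOn_Ioi 0 hr)
      simpa [neg_mul, IntegrableOn] using this.const_mul (Real.exp (1 - ρ / r) * Real.exp (-α * r * c₀))
    exact this.congr_fun (fun t _ => (key t).symm) measurableSet_Ioi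
  · have hint : ∫ t in Set.Ioi (0 : ℝ), Real.exp (-(r * t)) = 1 / r := by
      have := MeasureTheory.integral_comp_mul_left_Ioi (fun x => Real.exp (-x)) 0 hr
      simp only [mul_zero] at this
      rw [this, integral_exp_neg_Ioi_zero]
      simp [one_div]
    rw [setIntegral_congr_fun measurableSet_Ioi (fun t _ => key t)]
    rw [MeasureTheory.integral_const_mul, hint]
    ring
end

section
/- Let r, ρ, α > 0 and define V(c) = −(1/r)·exp(1 − ρ/r)·exp(−αrc). Let c : [0,∞) → ℝ be continuously differentiable with c(0) = c₀, set b(t) = r·c(t) − c'(t), and assume the transversality condition lim as t → ∞ of exp(−ρt)·exp(−αr·c(t)) = 0. Then −∫₀^∞ exp(−ρt)·exp(−α·b(t)) dt ≤ V(c₀), where the integral is taken in the extended sense (the integrand is nonnegative after negation). -/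
open Real MeasureTheory

lemma key_ineq_verif (A x : ℝ) : Real.exp (1 - A) * (A - x) ≤ Real.exp (-x) := by
  have h1 := Real.add_one_le_exp (A - 1 - x)
  have h2 : Real.exp (A - 1 - x) * Real.exp (1 - A) = Real.exp (-x) := by
    rw [← Real.exp_add]; ring_nf
  have h3 : (0:ℝ) < Real.exp (1 - A) := Real.exp_pos _
  nlinarith

/-- Infinite-horizon verification theorem for the terminal consumption problem: for any
continuously differentiable wealth path `c` on `[0, ∞)` with `c(0) = c₀`, consumption
`b(t) = r c(t) - c'(t)`, and satisfying the transversality condition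
`exp(-ρ t) exp(-α r c(t)) → 0`, the total discounted utility (in the extended sense, the
integrand being nonnegative after negation) is at most `V(c₀)`; equivalently,
`ENNReal.ofReal (-V c₀) ≤ ∫⁻ exp(-ρ t) exp(-α b(t)) dt`. -/
theorem infinite_horizon_verification (r ρ α c₀ : ℝ) (hr : 0 < r) (hρ : 0 < ρ) (hα : 0 < α)
    (V : ℝ → ℝ) (hV : ∀ c, V c = -(1 / r) * Real.exp (1 - ρ / r) * Real.exp (-α * r * c))
    (c c' : ℝ → ℝ)
    (hderiv : ∀ t ∈ Set.Ici (0 : ℝ), HasDerivWithinAt c (c' t) (Set.Ici 0) t)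
    (hcont : ContinuousOn c' (Set.Ici 0))
    (hc0 : c 0 = c₀)
    (htrans : Filter.Tendsto (fun t => Real.exp (-ρ * t) * Real.exp (-α * r * c t))
      Filter.atTop (nhds 0))
    (b : ℝ → ℝ) (hb : ∀ t, b t = r * c t - c' t) :
    ENNReal.ofReal (-(V c₀))
      ≤ ∫⁻ t in Set.Ioi (0 : ℝ), ENNReal.ofReal (Real.exp (-ρ * t) * Real.exp (-α * b t)) := by
  set K := (1/r) * Real.exp (1 - ρ/r) with hK
  have hKpos : 0 < K := by positivity
  set f : ℝ → ℝ := fun t => Real.exp (-ρ*t) * Real.exp (-α * b t) with hf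
  set g : ℝ → ℝ := fun t => K * Real.exp (-ρ*t - α*r*c t) with hg
  set g' : ℝ → ℝ := fun t => K * Real.exp (-ρ*t - α*r*c t) * (-ρ - α*r*c' t) with hg'
  have hccont : ContinuousOn c (Set.Ici 0) := fun t ht => (hderiv t ht).continuousWithinAt
  -- derivative of g
  have hgderiv : ∀ t ∈ Set.Ici (0:ℝ), HasDerivWithinAt g (g' t) (Set.Ici 0) t := by
    intro t ht
    have h1 : HasDerivWithinAt (fun s : ℝ => -ρ*s - α*r*c s) (-ρ - α*r*c' t)
        (Set.Ici 0) t := by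
      have ha : HasDerivWithinAt (fun s : ℝ => -ρ*s) (-ρ) (Set.Ici 0) t := by
        simpa using ((hasDerivAt_id t).const_mul (-ρ)).hasDerivWithinAt
      exact ha.sub ((hderiv t ht).const_mul (α*r))
    have := (h1.exp).const_mul K
    simpa [hg, hg', mul_assoc] using this
  -- pointwise inequality: -g' ≤ f
  have hfg : ∀ t, -g' t ≤ f t := by
    intro t
    have hc' : c' t = r * c t - b t := by rw [hb]; ring
    have key := key_ineq_verif (ρ/r) (α*(b t - r*c t))
    calc -g' t = Real.exp (1-ρ/r) * (ρ/r - α*(b t - r*c t)) * Real.exp (-ρ*t - α*r*c t) := by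
          simp only [hg', hc', hK]; field_simp; ring
      _ ≤ Real.exp (-(α*(b t - r*c t))) * Real.exp (-ρ*t - α*r*c t) :=
          mul_le_mul_of_nonneg_right key (Real.exp_pos _).le
      _ = f t := by
          simp only [hf]
          rw [← Real.exp_add, ← Real.exp_add]
          congr 1
          ring
  -- continuity facts
  have hbcont : ContinuousOn b (Set.Ici 0) := by
    have : b = fun t => r * c t - c' t := funext hb
    rw [this]; exact (continuousOn_const.mul hccont).sub hcont
  have hinner : ContinuousOn (fun t : ℝ => -ρ*t - α*r*c t) (Set.Ici 0) :=
    ((continuous_const.mul continuous_id).continuousOn).sub (continuousOn_const.mul hccont)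
  have hgcont : ContinuousOn g (Set.Ici 0) := continuousOn_const.mul hinner.rexp
  have hg'cont : ContinuousOn g' (Set.Ici 0) :=
    (continuousOn_const.mul hinner.rexp).mul (continuousOn_const.sub (continuousOn_const.mul hcont))
  have hfcont : ContinuousOn f (Set.Ici 0) :=
    (((continuous_const.mul continuous_id).continuousOn).rexp).mul
      ((continuousOn_const.mul hbcont).rexp)
  have hfnonneg : ∀ t, 0 ≤ f t := fun t => by positivity
  -- main finite-horizon estimate
  have hmain : ∀ T : ℝ, 0 ≤ T →
      ENNReal.ofReal (g 0 - g T)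
        ≤ ∫⁻ t in Set.Ioi (0:ℝ), ENNReal.ofReal (f t) := by
    intro T hT
    have hsub : Set.uIcc (0:ℝ) T ⊆ Set.Ici (0:ℝ) := by
      rw [Set.uIcc_of_le hT]; exact Set.Icc_subset_Ici_self
    have hint_g' : IntervalIntegrable g' volume 0 T :=
      (hg'cont.mono hsub).intervalIntegrable
    have hint_f : IntervalIntegrable f volume 0 T :=
      (hfcont.mono hsub).intervalIntegrable
    have hftc : ∫ t in (0:ℝ)..T, g' t = g T - g 0 := by
      apply intervalIntegral.integral_eq_sub_of_hasDeriv_right_of_le hT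
        (hgcont.mono (by rw [Set.uIcc_of_le hT] at hsub; exact hsub))
      · intro x hx
        exact ((hgderiv x (le_of_lt hx.1)).hasDerivAt
          (Ici_mem_nhds hx.1)).hasDerivWithinAt
      · exact hint_g'
    have h5 : g 0 - g T ≤ ∫ t in (0:ℝ)..T, f t := by
      have hmono := intervalIntegral.integral_mono_on hT hint_g'.neg hint_f
        (fun t _ => hfg t)
      simp only [Pi.neg_apply, intervalIntegral.integral_neg, hftc] at hmono
      linarith
    have hIoc : g 0 - g T ≤ ∫ t in Set.Ioc (0:ℝ) T, f t := by
      rwa [intervalIntegral.integral_of_le hT] at h5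
    calc ENNReal.ofReal (g 0 - g T)
        ≤ ENNReal.ofReal (∫ t in Set.Ioc (0:ℝ) T, f t) := ENNReal.ofReal_le_ofReal hIoc
      _ ≤ ∫⁻ t in Set.Ioc (0:ℝ) T, ENNReal.ofReal (f t) := by
          rw [ofReal_integral_eq_lintegral_ofReal
            ((intervalIntegrable_iff_integrableOn_Ioc_of_le hT).mp hint_f)
            (Filter.Eventually.of_forall hfnonneg)]
      _ ≤ ∫⁻ t in Set.Ioi (0:ℝ), ENNReal.ofReal (f t) :=
          lintegral_mono_set Set.Ioc_subset_Ioi_self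
  -- limits
  have hgT : Filter.Tendsto g Filter.atTop (nhds 0) := by
    have h1 : Filter.Tendsto (fun t => K * (Real.exp (-ρ*t) * Real.exp (-α*r*c t)))
        Filter.atTop (nhds (K * 0)) := htrans.const_mul K
    rw [mul_zero] at h1
    refine h1.congr (fun t => ?_)
    rw [hg, ← Real.exp_add]
    ring_nf
  have hlim : Filter.Tendsto (fun T => ENNReal.ofReal (g 0 - g T)) Filter.atTop
      (nhds (ENNReal.ofReal (g 0 - 0))) :=
    (ENNReal.continuous_ofReal.tendsto _).comp (tendsto_const_nhds.sub hgT)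
  have hg0 : g 0 - 0 = -(V c₀) := by
    rw [hg, hV]
    simp [hK, hc0]
  rw [← hg0]
  exact le_of_tendsto hlim (Filter.eventually_atTop.mpr ⟨0, fun T hT => hmain T hT⟩)
end

section
/- Let r, ρ, α > 0 and c₀ ∈ ℝ. Over all continuously differentiable paths c : [0,∞) → ℝ with c(0) = c₀ satisfying the transversality condition lim as t → ∞ of exp(−ρt)·exp(−αr·c(t)) = 0, with associated consumption b(t) = r·c(t) − c'(t), the supremum of −∫₀^∞ exp(−ρt)·exp(−α·b(t)) dt equals V(c₀) = −(1/r)·exp(1 − ρ/r)·exp(−αr·c₀), and it is attained by the path c(t) = c₀ − ((ρ − r)/(αr))·t. -/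
open Real MeasureTheory

open Topology Filter

-- integral of exp(-r x) over Ioi 0
lemma tcv_exp_integral {r : ℝ} (hr : 0 < r) :
    ∫ x in Set.Ioi (0:ℝ), Real.exp (-r * x) = 1 / r := by
  have hderiv : ∀ x ∈ Set.Ici (0:ℝ),
      HasDerivAt (fun x => -Real.exp (-r * x) / r) (Real.exp (-r * x)) x := by
    intro x _
    have h := (((hasDerivAt_id x).const_mul (-r)).exp.neg).div_const r
    refine h.congr_deriv ?_
    simp only [id]
    field_simp
  have htends : Tendsto (fun x => -Real.exp (-r * x) / r) atTop (𝓝 0) := by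
    have : Tendsto (fun x : ℝ => -r * x) atTop atBot :=
      tendsto_id.const_mul_atTop_of_neg (neg_neg_iff_pos.2 hr)
    have h2 := (tendsto_exp_atBot.comp this).neg.div_const r
    simpa using h2
  have h := MeasureTheory.integral_Ioi_of_hasDerivAt_of_tendsto'
    hderiv (exp_neg_integrableOn_Ioi 0 hr) htends
  rw [h]; norm_num; ring

lemma tcv_ofReal_integral_le {f : ℝ → ℝ} {s : Set ℝ} (hf : MeasureTheory.IntegrableOn f s) :
    ENNReal.ofReal (∫ x in s, f x) ≤ ∫⁻ x in s, ENNReal.ofReal (f x) := by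
  calc ENNReal.ofReal (∫ x in s, f x)
      ≤ ENNReal.ofReal (∫ x in s, max (f x) 0) :=
        ENNReal.ofReal_le_ofReal (integral_mono hf hf.pos_part fun x => le_max_left _ _)
    _ = ∫⁻ x in s, ENNReal.ofReal (max (f x) 0) :=
        ofReal_integral_eq_lintegral_ofReal hf.pos_part
          (ae_of_all _ fun x => le_max_right _ _)
    _ = ∫⁻ x in s, ENNReal.ofReal (f x) := by
        refine lintegral_congr fun x => ?_
        rcases le_total (f x) 0 with h | h
        · rw [max_eq_right h, ENNReal.ofReal_of_nonpos h, ENNReal.ofReal_zero]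
        · rw [max_eq_left h]

-- candidate lintegral value
lemma tcv_cand_lintegral {r K : ℝ} (hr : 0 < r) (hK : 0 ≤ K) :
    ∫⁻ t in Set.Ioi (0:ℝ), ENNReal.ofReal (K * Real.exp (-r * t))
      = ENNReal.ofReal (K / r) := by
  have hint : MeasureTheory.IntegrableOn (fun t => K * Real.exp (-r * t)) (Set.Ioi (0:ℝ)) :=
    (exp_neg_integrableOn_Ioi 0 hr).const_mul K
  rw [← ofReal_integral_eq_lintegral_ofReal hint
      (ae_of_all _ fun x => by positivity)]
  rw [integral_const_mul, tcv_exp_integral hr]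
  ring_nf

lemma tcv_cand_pointwise {r ρ α : ℝ} (c₀ t : ℝ) (hr : r ≠ 0) (hα : α ≠ 0) :
    Real.exp (-ρ*t) * Real.exp (-α*(r*(c₀ - ((ρ-r)/(α*r))*t) - (-((ρ-r)/(α*r)))))
      = (Real.exp (1 - ρ/r) * Real.exp (-α*r*c₀)) * Real.exp (-r*t) := by
  rw [← Real.exp_add, ← Real.exp_add, ← Real.exp_add]
  congr 1
  field_simp
  ring

set_option maxHeartbeats 1000000 in
lemma tcv_upper {r ρ α c₀ : ℝ} (hr : 0 < r) (hρ : 0 < ρ) (hα : 0 < α)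
    (c c' : ℝ → ℝ)
    (hc : ∀ t ∈ Set.Ici (0 : ℝ), HasDerivWithinAt c (c' t) (Set.Ici 0) t)
    (hc' : ContinuousOn c' (Set.Ici 0))
    (h0 : c 0 = c₀)
    (htr : Filter.Tendsto (fun t => Real.exp (-ρ * t) * Real.exp (-α * r * c t))
      Filter.atTop (𝓝 0)) :
    ENNReal.ofReal ((Real.exp (1 - ρ/r) * Real.exp (-α*r*c₀)) / r)
      ≤ ∫⁻ t in Set.Ioi (0:ℝ),
          ENNReal.ofReal (Real.exp (-ρ * t) * Real.exp (-α * (r * c t - c' t))) := by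
  set K := Real.exp (1 - ρ/r) * Real.exp (-α*r*c₀) with hKdef
  have hK : 0 < K := by positivity
  set k : ℝ := (ρ - r)/(α*r) with hkdef
  set d : ℝ → ℝ := fun t => c t - c₀ + k * t with hddef
  set LB : ℝ → ℝ := fun t => K * Real.exp (-r*t) * (1 - α*(r * d t - (c' t + k)))
    with hLBdef
  set F : ℝ → ℝ := fun t => -(K/r) * Real.exp (-r*t) + α*K*(Real.exp (-r*t) * d t)
    with hFdef
  -- Step A : pointwise tangent-line bound
  have stepA : ∀ t : ℝ, LB t ≤ Real.exp (-ρ * t) * Real.exp (-α * (r * c t - c' t)) := by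
    intro t
    have h1 : Real.exp (-ρ*t) * Real.exp (-α*(r*c t - c' t))
        = Real.exp (((1 - ρ/r) + (-α*r*c₀) + (-r*t)) + (-α*(r * d t - (c' t + k)))) := by
      rw [← Real.exp_add]
      congr 1
      simp only [hddef, hkdef]
      field_simp
      ring
    have h2 : LB t = Real.exp ((1 - ρ/r) + (-α*r*c₀) + (-r*t))
        * ((-α*(r * d t - (c' t + k))) + 1) := by
      simp only [hLBdef, hKdef]
      rw [Real.exp_add, Real.exp_add]
      ring
    rw [h1, h2]
    have h3 := mul_le_mul_of_nonneg_left
      (Real.add_one_le_exp (-α*(r * d t - (c' t + k))))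
      (Real.exp_pos ((1 - ρ/r) + (-α*r*c₀) + (-r*t))).le
    rw [← Real.exp_add] at h3
    exact h3
  -- continuity facts
  have hccont : ContinuousOn c (Set.Ici 0) := fun t ht => (hc t ht).continuousWithinAt
  have hdcont : ContinuousOn d (Set.Ici 0) := by
    simp only [hddef]
    exact (hccont.sub continuousOn_const).add (continuousOn_const.mul continuousOn_id)
  have hLBcont : ContinuousOn LB (Set.Ici 0) := by
    simp only [hLBdef]
    refine ContinuousOn.mul (continuous_const.mul
      (Real.continuous_exp.comp (continuous_const.mul continuous_id))).continuousOn ?_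
    exact continuousOn_const.sub (continuousOn_const.mul
      ((continuousOn_const.mul hdcont).sub (hc'.add continuousOn_const)))
  have hLBii : ∀ T : ℝ, 0 ≤ T → IntervalIntegrable LB MeasureTheory.volume 0 T := by
    intro T hT
    apply ContinuousOn.intervalIntegrable
    rw [Set.uIcc_of_le hT]
    exact hLBcont.mono Set.Icc_subset_Ici_self
  -- Step B : FTC
  have stepB : ∀ T : ℝ, 0 ≤ T → ∫ t in Set.Ioc (0:ℝ) T, LB t = F T - F 0 := by
    intro T hT
    have hFcont : ContinuousOn F (Set.Icc 0 T) := by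
      simp only [hFdef]
      have hec : Continuous fun t : ℝ => Real.exp (-r*t) :=
        Real.continuous_exp.comp (continuous_const.mul continuous_id)
      refine ContinuousOn.add ((continuous_const.mul hec).continuousOn) ?_
      exact continuousOn_const.mul (hec.continuousOn.mul
        (hdcont.mono Set.Icc_subset_Ici_self))
    have hFderiv : ∀ x ∈ Set.Ioo (0:ℝ) T, HasDerivWithinAt F (LB x) (Set.Ioi x) x := by
      intro x hx
      have hx0 : (0:ℝ) ≤ x := hx.1.le
      have hsub : Set.Ioi x ⊆ Set.Ici (0:ℝ) := fun y hy => le_trans hx0 (le_of_lt hy)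
      have hd : HasDerivWithinAt d (c' x + k * 1) (Set.Ioi x) x := by
        simp only [hddef]
        exact (((hc x hx0).sub_const c₀).add
          (((hasDerivAt_id x).const_mul k).hasDerivWithinAt)).mono hsub
      have he : HasDerivWithinAt (fun t => Real.exp (-r*t)) (Real.exp (-r*x) * (-r*1))
          (Set.Ioi x) x :=
        (((hasDerivAt_id x).const_mul (-r)).exp).hasDerivWithinAt
      have hcomb := (he.const_mul (-(K/r))).add ((he.mul hd).const_mul (α*K))
      refine HasDerivWithinAt.congr_deriv hcomb ?_
      simp only [hLBdef]
      field_simp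
      ring
    have := intervalIntegral.integral_eq_sub_of_hasDeriv_right_of_le hT hFcont hFderiv
      (hLBii T hT)
    rw [← this, intervalIntegral.integral_of_le hT]
  -- Step C : lintegral lower bound at every horizon
  have stepC : ∀ T : ℝ, 0 ≤ T → ENNReal.ofReal (F T - F 0)
      ≤ ∫⁻ t in Set.Ioi (0:ℝ),
          ENNReal.ofReal (Real.exp (-ρ * t) * Real.exp (-α * (r * c t - c' t))) := by
    intro T hT
    have hint : MeasureTheory.IntegrableOn LB (Set.Ioc 0 T) :=
      (intervalIntegrable_iff_integrableOn_Ioc_of_le hT).mp (hLBii T hT)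
    calc ENNReal.ofReal (F T - F 0)
        = ENNReal.ofReal (∫ t in Set.Ioc (0:ℝ) T, LB t) := by rw [stepB T hT]
      _ ≤ ∫⁻ t in Set.Ioc (0:ℝ) T, ENNReal.ofReal (LB t) := tcv_ofReal_integral_le hint
      _ ≤ ∫⁻ t in Set.Ioc (0:ℝ) T, ENNReal.ofReal
            (Real.exp (-ρ * t) * Real.exp (-α * (r * c t - c' t))) :=
          lintegral_mono fun t => ENNReal.ofReal_le_ofReal (stepA t)
      _ ≤ _ := lintegral_mono_set Set.Ioc_subset_Ioi_self
  -- transversality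
  have htt : Filter.Tendsto (fun t => ρ*t + α*r*c t) Filter.atTop Filter.atTop := by
    have h1 : (fun t => Real.exp (-ρ * t) * Real.exp (-α * r * c t))
        = fun t => Real.exp (-(ρ*t + α*r*c t)) := by
      funext t
      rw [← Real.exp_add]
      ring_nf
    rw [h1] at htr
    have h2 := Real.tendsto_exp_comp_nhds_zero.mp htr
    exact tendsto_neg_atBot_iff.mp h2
  have hexp0 : Filter.Tendsto (fun T : ℝ => Real.exp (-r*T)) Filter.atTop (𝓝 0) :=
    Real.tendsto_exp_atBot.comp (tendsto_id.const_mul_atTop_of_neg (neg_neg_iff_pos.2 hr))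
  -- Step D : key inequality for every δ > 0
  have key : ∀ δ : ℝ, 0 < δ → ENNReal.ofReal (K/r - δ)
      ≤ ∫⁻ t in Set.Ioi (0:ℝ),
          ENNReal.ofReal (Real.exp (-ρ * t) * Real.exp (-α * (r * c t - c' t))) := by
    intro δ hδ
    have E1 : ∀ᶠ T : ℝ in Filter.atTop, (0:ℝ) ≤ T := Filter.eventually_ge_atTop 0
    have E2 : ∀ᶠ T : ℝ in Filter.atTop, (K/r) * Real.exp (-r*T) ≤ δ/2 := by
      have h := hexp0.const_mul (K/r)
      rw [mul_zero] at h
      exact h.eventually_le_const (half_pos hδ)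
    have E3 : ∀ᶠ T : ℝ in Filter.atTop, (0:ℝ) ≤ ρ*T + α*r*c T := htt.eventually_ge_atTop 0
    have hbase : Filter.Tendsto (fun x : ℝ => x * Real.exp (-x)) Filter.atTop (𝓝 0) := by
      simpa using Real.tendsto_pow_mul_exp_neg_atTop_nhds_zero 1
    have hrt : Filter.Tendsto (fun T : ℝ => (r*T) * Real.exp (-(r*T))) Filter.atTop (𝓝 0) :=
      hbase.comp (tendsto_id.const_mul_atTop hr)
    have E4 : ∀ᶠ T : ℝ in Filter.atTop,
        α*K*(Real.exp (-r*T)*(α*r*c₀ + r*T))/(α*r) ≤ δ/2 := by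
      have h : Filter.Tendsto
          (fun T : ℝ => α*K*(Real.exp (-r*T)*(α*r*c₀ + r*T))/(α*r))
          Filter.atTop (𝓝 0) := by
        have h1 := (hexp0.const_mul (α*K*(α*r*c₀)/(α*r))).add (hrt.const_mul (α*K/(α*r)))
        rw [mul_zero, mul_zero, add_zero] at h1
        refine h1.congr fun T => ?_
        rw [neg_mul]
        ring
      exact h.eventually_le_const (half_pos hδ)
    obtain ⟨T, hT0, hTe2, hTe3, hTe4⟩ := (E1.and (E2.and (E3.and E4))).exists
    have hdT : Real.exp (-r*T) * d T
        = (Real.exp (-r*T)*(ρ*T + α*r*c T) - Real.exp (-r*T)*(α*r*c₀ + r*T))/(α*r) := by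
      simp only [hddef, hkdef]
      field_simp
      ring
    have hb2 : -(δ/2) ≤ α*K*(Real.exp (-r*T) * d T) := by
      rw [hdT]
      have hpos : 0 ≤ α*K*(Real.exp (-r*T)*(ρ*T + α*r*c T))/(α*r) := by positivity
      have heq : α*K*((Real.exp (-r*T)*(ρ*T + α*r*c T)
            - Real.exp (-r*T)*(α*r*c₀ + r*T))/(α*r))
          = α*K*(Real.exp (-r*T)*(ρ*T + α*r*c T))/(α*r)
            - α*K*(Real.exp (-r*T)*(α*r*c₀ + r*T))/(α*r) := by ring
      rw [heq]
      linarith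
    have hF0 : F 0 = -(K/r) := by
      simp [hFdef, hddef, h0]
    have hFT : K/r - δ ≤ F T - F 0 := by
      rw [hF0]
      simp only [hFdef]
      have h1 : -(K/r) * Real.exp (-r*T) ≥ -(δ/2) := by linarith
      linarith
    exact le_trans (ENNReal.ofReal_le_ofReal hFT) (stepC T hT0)
  -- pass to the limit δ → 0⁺
  have hlim : Filter.Tendsto (fun δ : ℝ => ENNReal.ofReal (K/r - δ)) (𝓝[>] (0:ℝ))
      (𝓝 (ENNReal.ofReal (K/r))) := by
    have h1 : Filter.Tendsto (fun δ : ℝ => K/r - δ) (𝓝[>] (0:ℝ)) (𝓝 (K/r)) := by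
      have h2 : Filter.Tendsto (fun δ : ℝ => K/r - δ) (𝓝 (0:ℝ)) (𝓝 (K/r - 0)) :=
        tendsto_const_nhds.sub tendsto_id
      rw [sub_zero] at h2
      exact h2.mono_left nhdsWithin_le_nhds
    exact (ENNReal.continuous_ofReal.tendsto _).comp h1
  exact le_of_tendsto hlim (eventually_nhdsWithin_of_forall fun δ hδ => key δ hδ)


set_option maxHeartbeats 1000000 in
/-- Terminal consumption problem: over all continuously differentiable wealth paths on
`[0, ∞)` starting at `c₀` and satisfying the transversality condition, with consumption
`b = r c - c'`, the supremum of the total discounted utility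
`-∫₀^∞ exp(-ρ t) exp(-α b(t)) dt` (taken in the extended sense, valued in `EReal`)
equals `V(c₀) = -(1/r) exp(1 - ρ/r) exp(-α r c₀)`, and it is attained by the linear path
`c(t) = c₀ - ((ρ - r)/(α r)) t`. -/
theorem terminal_consumption_value (r ρ α c₀ : ℝ) (hr : 0 < r) (hρ : 0 < ρ) (hα : 0 < α)
    (V : ℝ → ℝ) (hV : ∀ c, V c = -(1 / r) * Real.exp (1 - ρ / r) * Real.exp (-α * r * c))
    (S : Set EReal)
    (hS : S = {x : EReal | ∃ c c' : ℝ → ℝ,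
      (∀ t ∈ Set.Ici (0 : ℝ), HasDerivWithinAt c (c' t) (Set.Ici 0) t) ∧
      ContinuousOn c' (Set.Ici 0) ∧
      c 0 = c₀ ∧
      Filter.Tendsto (fun t => Real.exp (-ρ * t) * Real.exp (-α * r * c t))
        Filter.atTop (nhds 0) ∧
      x = -((∫⁻ t in Set.Ioi (0 : ℝ),
          ENNReal.ofReal (Real.exp (-ρ * t) * Real.exp (-α * (r * c t - c' t)))) : EReal)}) :
    IsGreatest S ((V c₀ : ℝ) : EReal) ∧
    -((∫⁻ t in Set.Ioi (0 : ℝ),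
        ENNReal.ofReal (Real.exp (-ρ * t) *
          Real.exp (-α * (r * (c₀ - ((ρ - r) / (α * r)) * t) - (-((ρ - r) / (α * r))))))) : EReal)
      = ((V c₀ : ℝ) : EReal) := by
  set K := Real.exp (1 - ρ/r) * Real.exp (-α*r*c₀) with hKdef
  have hK : 0 < K := by positivity
  have hKr : 0 ≤ K / r := by positivity
  set k : ℝ := (ρ - r)/(α*r) with hkdef
  -- value of the candidate lintegral
  have hcand : (∫⁻ t in Set.Ioi (0 : ℝ),
      ENNReal.ofReal (Real.exp (-ρ * t) *
        Real.exp (-α * (r * (c₀ - ((ρ - r) / (α * r)) * t) - (-((ρ - r) / (α * r)))))))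
      = ENNReal.ofReal (K / r) := by
    rw [← tcv_cand_lintegral hr hK.le]
    refine lintegral_congr fun t => ?_
    rw [tcv_cand_pointwise c₀ t hr.ne' hα.ne']
  have hVK : V c₀ = -(K/r) := by rw [hV]; rw [hKdef]; ring
  have hcoe : -((ENNReal.ofReal (K / r) : EReal)) = ((V c₀ : ℝ) : EReal) := by
    rw [EReal.coe_ennreal_ofReal, max_eq_left hKr, hVK, EReal.coe_neg]
  constructor
  · constructor
    · -- membership : the candidate path
      rw [hS]
      refine ⟨fun t => c₀ - k * t, fun _ => -k, ?_, continuousOn_const, by simp, ?_, ?_⟩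
      · intro t _
        have h := ((hasDerivAt_id t).const_mul k).const_sub c₀
        simpa using h.hasDerivWithinAt
      · have heq : (fun t => Real.exp (-ρ * t) * Real.exp (-α * r * (c₀ - k * t)))
            = fun t => Real.exp (-α * r * c₀) * Real.exp (-r * t) := by
          funext t
          rw [← Real.exp_add, ← Real.exp_add]
          congr 1
          simp only [hkdef]
          field_simp
          ring
        rw [heq]
        have hexp0 : Filter.Tendsto (fun T : ℝ => Real.exp (-r*T)) Filter.atTop (𝓝 0) :=
          Real.tendsto_exp_atBot.comp (tendsto_id.const_mul_atTop_of_neg (neg_neg_iff_pos.2 hr))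
        have h := hexp0.const_mul (Real.exp (-α * r * c₀))
        rwa [mul_zero] at h
      · rw [← hkdef] at hcand
        rw [hcand, hcoe]
    · -- upper bound
      intro x hx
      rw [hS] at hx
      obtain ⟨c, c', hc, hc', h0, htr, hxval⟩ := hx
      have hub := tcv_upper hr hρ hα c c' hc hc' h0 htr
      rw [← hKdef] at hub
      rw [hxval, ← hcoe]
      rw [EReal.neg_le_neg_iff]
      exact EReal.coe_ennreal_le_coe_ennreal_iff.mpr hub
  · rw [hcand, hcoe]
end
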